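/- arXiv:1505.00164 — 4 statements merged into one kernel-verified Lean document; each statement's English description precedes it below -/
import Mathlib

section
/- Let I be a single-line instance in which all candidate labels are assigned to the same side of the line and which satisfies the transitivity property (Assumption A2), with cost functions w₁ and w₂. Then a choice function ℓ₁,…,ℓ_n (ℓ_i ∈ K_i) is a labeling of I if and only if ℓ_{i-1} and ℓ_i are disjoint for every i = 2,…,n, and in that case its cost satisfies w(L) = w₁(ℓ₁) + Σ_{i=2}^{n} (w₁(ℓ_i) + w₂(ℓ_{i-1}, ℓ_i)). Consequently the minimum cost over all labelings of I equals the minimum of w₁(ℓ₁) + Σ_{i=2}^{n} (w₁(ℓ_i) + w₂(ℓ_{i-1}, ℓ_i)) over all choice functions whose consecutive labels are disjoint. -/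
/-- A label is a subset of the plane ℝ². -/
abbrev Label : Type := Set (ℝ × ℝ)

/-- `f` is a labeling of the stops `a, a+1, …, b`: it chooses at each stop a candidate
of that stop, and all chosen labels are pairwise disjoint. -/
def IsLabelingOn (K : ℕ → Set Label) (a b : ℕ) (f : ℕ → Label) : Prop :=
  (∀ m, a ≤ m → m ≤ b → f m ∈ K m) ∧
  (∀ m m', a ≤ m → m ≤ b → a ≤ m' → m' ≤ b → m ≠ m' → Disjoint (f m) (f m'))

/-- Assumption A2 (transitivity property) for a single-line instance with stops `1,…,n`. -/
def TransProp (n : ℕ) (K : ℕ → Set Label) (side : Label → Bool) : Prop :=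
  ∀ i j k : ℕ, 1 ≤ i → i < j → j < k → k ≤ n →
    ∀ ℓ ∈ K i, ∀ ℓ' ∈ K j, ∀ ℓ'' ∈ K k,
      side ℓ = side ℓ' → side ℓ' = side ℓ'' →
      Disjoint ℓ ℓ' → Disjoint ℓ' ℓ'' → Disjoint ℓ ℓ''

/-- The cost of a one-sided labeling `f` of stops `1,…,n`:
`w(L) = Σ_i w₁(ℓ_i) + Σ_{i=2}^{n} w₂(ℓ_{i-1}, ℓ_i)`. -/
noncomputable def oneSidedCost (n : ℕ) (w₁ : Label → ℝ) (w₂ : Label → Label → ℝ)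
    (f : ℕ → Label) : ℝ :=
  (∑ i ∈ Finset.Icc 1 n, w₁ (f i)) + ∑ i ∈ Finset.Icc 2 n, w₂ (f (i - 1)) (f i)

/-! On a single side, A2 makes disjointness transitive along the sequence of chosen labels, so
disjointness of consecutive labels propagates to all pairs: a choice function is a labeling exactly
when consecutive labels are disjoint. The cost formula is a regrouping of the two sums, and the two
minimisation problems range over the same set of values. -/

theorem rel_of_consecutive_of_trans {α : Type*} {r : α → α → Prop} {f : ℕ → α} {a b : ℕ}
    (hcons : ∀ i, a < i → i ≤ b → r (f (i - 1)) (f i))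
    (htrans : ∀ i j k, a ≤ i → i < j → j < k → k ≤ b →
      r (f i) (f j) → r (f j) (f k) → r (f i) (f k))
    {i j : ℕ} (hai : a ≤ i) (hij : i < j) (hjb : j ≤ b) : r (f i) (f j) := by
  induction j, hij using Nat.le_induction with
  | base => simpa using hcons (i + 1) (by omega) hjb
  | succ j hij ih =>
    exact htrans i j (j + 1) hai hij (by omega) hjb (ih (by omega))
      (by simpa using hcons (j + 1) (by omega) hjb)

section SingleLine

variable {n : ℕ} {K : ℕ → Set Label} {side : Label → Bool} {f : ℕ → Label}

theorem TransProp.disjoint_of_consecutive_disjoint (hA2 : TransProp n K side)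
    (hSameSide : ∀ i, 1 ≤ i → i ≤ n → ∀ ℓ ∈ K i,
      ∀ j, 1 ≤ j → j ≤ n → ∀ ℓ' ∈ K j, side ℓ = side ℓ')
    (hK : ∀ i, 1 ≤ i → i ≤ n → f i ∈ K i)
    (hcons : ∀ i, 2 ≤ i → i ≤ n → Disjoint (f (i - 1)) (f i))
    {i j : ℕ} (hi : 1 ≤ i) (hij : i < j) (hjn : j ≤ n) : Disjoint (f i) (f j) := by
  refine rel_of_consecutive_of_trans (r := Disjoint) hcons ?_ hi hij hjn
  intro i j k hi hij hjk hkn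
  have hKi := hK i hi (by omega)
  have hKj := hK j (by omega) (by omega)
  have hKk := hK k (by omega) hkn
  exact hA2 i j k hi hij hjk hkn _ hKi _ hKj _ hKk
    (hSameSide i hi (by omega) _ hKi j (by omega) (by omega) _ hKj)
    (hSameSide j (by omega) (by omega) _ hKj k (by omega) hkn _ hKk)

theorem TransProp.isLabelingOn_iff (hA2 : TransProp n K side)
    (hSameSide : ∀ i, 1 ≤ i → i ≤ n → ∀ ℓ ∈ K i,
      ∀ j, 1 ≤ j → j ≤ n → ∀ ℓ' ∈ K j, side ℓ = side ℓ')
    (hK : ∀ i, 1 ≤ i → i ≤ n → f i ∈ K i) :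
    IsLabelingOn K 1 n f ↔ ∀ i, 2 ≤ i → i ≤ n → Disjoint (f (i - 1)) (f i) := by
  refine ⟨fun ⟨_, hdisj⟩ i hi hin ↦ hdisj (i - 1) i (by omega) (by omega) (by omega) hin
    (by omega), fun hcons ↦ ⟨hK, fun m m' hm hmn hm' hm'n hne ↦ ?_⟩⟩
  rcases hne.lt_or_gt with h | h
  · exact hA2.disjoint_of_consecutive_disjoint hSameSide hK hcons hm h hm'n
  · exact (hA2.disjoint_of_consecutive_disjoint hSameSide hK hcons hm' h hmn).symm

end SingleLine

theorem oneSidedCost_eq {n : ℕ} (hn : 1 ≤ n) (w₁ : Label → ℝ) (w₂ : Label → Label → ℝ)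
    (f : ℕ → Label) :
    oneSidedCost n w₁ w₂ f
      = w₁ (f 1) + ∑ i ∈ Finset.Icc 2 n, (w₁ (f i) + w₂ (f (i - 1)) (f i)) := by
  have hIcc : Finset.Icc 1 n = insert 1 (Finset.Icc 2 n) := by
    ext x
    simp only [Finset.mem_Icc, Finset.mem_insert]
    omega
  rw [oneSidedCost, hIcc, Finset.sum_insert (by simp), Finset.sum_add_distrib]
  ring

/-- In a one-sided instance satisfying the transitivity property:
(1) a choice of one candidate per stop is a labeling iff consecutive chosen labels are
disjoint; (2) the cost of a labeling is
`w₁(ℓ₁) + Σ_{i=2}^{n} (w₁(ℓ_i) + w₂(ℓ_{i-1}, ℓ_i))`; and consequently (3) the minimum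
cost over all labelings equals the minimum of that expression over all choice functions
whose consecutive labels are disjoint. -/
theorem stmt2
    (n : ℕ) (hn : 1 ≤ n) (K : ℕ → Set Label) (side : Label → Bool)
    (hSameSide : ∀ i, 1 ≤ i → i ≤ n → ∀ ℓ ∈ K i,
      ∀ j, 1 ≤ j → j ≤ n → ∀ ℓ' ∈ K j, side ℓ = side ℓ')
    (hA2 : TransProp n K side)
    (w₁ : Label → ℝ) (w₂ : Label → Label → ℝ) :
    (∀ f : ℕ → Label, (∀ i, 1 ≤ i → i ≤ n → f i ∈ K i) →
      (IsLabelingOn K 1 n f ↔ ∀ i, 2 ≤ i → i ≤ n → Disjoint (f (i - 1)) (f i))) ∧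
    (∀ f : ℕ → Label, IsLabelingOn K 1 n f →
      oneSidedCost n w₁ w₂ f
        = w₁ (f 1) + ∑ i ∈ Finset.Icc 2 n, (w₁ (f i) + w₂ (f (i - 1)) (f i))) ∧
    sInf {c : ℝ | ∃ f : ℕ → Label, IsLabelingOn K 1 n f ∧ c = oneSidedCost n w₁ w₂ f}
      = sInf {c : ℝ | ∃ f : ℕ → Label, (∀ i, 1 ≤ i → i ≤ n → f i ∈ K i) ∧
          (∀ i, 2 ≤ i → i ≤ n → Disjoint (f (i - 1)) (f i)) ∧
          c = w₁ (f 1) + ∑ i ∈ Finset.Icc 2 n, (w₁ (f i) + w₂ (f (i - 1)) (f i))} := by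
  have hLabeling := fun f ↦ hA2.isLabelingOn_iff (f := f) hSameSide
  refine ⟨hLabeling, fun f _ ↦ oneSidedCost_eq hn w₁ w₂ f, ?_⟩
  congr 1
  ext c
  constructor
  · rintro ⟨f, hf, rfl⟩
    exact ⟨f, hf.1, (hLabeling f hf.1).mp hf, oneSidedCost_eq hn w₁ w₂ f⟩
  · rintro ⟨f, hK, hcons, rfl⟩
    exact ⟨f, (hLabeling f hK).mpr hcons, (oneSidedCost_eq hn w₁ w₂ f).symm⟩
end

section
/- Let I be a single-line instance satisfying Assumption A1 (separated labels) and Assumption A2 (transitivity property). Let i < j < j+1 < k be stops, where j and j+1 are consecutive. Let L be a labeling of the instance restricted to stops 1,…,j+1, let ℓ ∈ L ∩ K_i, ℓ'₁ ∈ L ∩ K_j and ℓ'₂ ∈ L ∩ K_{j+1} be such that (ℓ'₁, ℓ'₂) is a switchover (i.e., ℓ'₁ and ℓ'₂ are assigned to opposite sides). Then every candidate ℓ'' ∈ K_k that intersects ℓ also intersects ℓ'₁ or ℓ'₂. -/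
/-- Assumption A1 (separated labels) for a single-line instance with stops `1,…,n`:
candidates assigned to different sides of the line are disjoint. -/
def SepLabels (n : ℕ) (K : ℕ → Set Label) (side : Label → Bool) : Prop :=
  ∀ i j : ℕ, 1 ≤ i → i ≤ n → 1 ≤ j → j ≤ n →
    ∀ ℓ ∈ K i, ∀ ℓ' ∈ K j, side ℓ ≠ side ℓ' → Disjoint ℓ ℓ'

/-- Lemma 3 (two-sided transitivity lemma): under Assumptions A1 and A2, let
`i < j < j+1 < k` be stops, let `f` be a labeling of the stops `1,…,j+1` such that the
chosen labels at the consecutive stops `j` and `j+1` form a switchover (they are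
assigned to opposite sides). Then every candidate `ℓ'' ∈ K k` that intersects the
chosen label `f i` also intersects `f j` or `f (j+1)`. -/
theorem stmt3
    (n : ℕ) (K : ℕ → Set Label) (side : Label → Bool)
    (hA1 : SepLabels n K side) (hA2 : TransProp n K side)
    (i j k : ℕ) (hi : 1 ≤ i) (hij : i < j) (hjk : j + 1 < k) (hk : k ≤ n)
    (f : ℕ → Label) (hf : IsLabelingOn K 1 (j + 1) f)
    (hsw : side (f j) ≠ side (f (j + 1)))
    (ℓ'' : Label) (hℓ'' : ℓ'' ∈ K k)
    (hint : ¬ Disjoint (f i) ℓ'') :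
    ¬ Disjoint (f j) ℓ'' ∨ ¬ Disjoint (f (j + 1)) ℓ'' := by
  by_contra hcon
  push_neg at hcon
  obtain ⟨h1, h2⟩ := hcon
  apply hint
  obtain ⟨hmem, hdisj⟩ := hf
  have hjn : j ≤ n := by omega
  have hj1n : j + 1 ≤ n := by omega
  have hin : i ≤ n := by omega
  have hfi : f i ∈ K i := hmem i hi (by omega)
  have hfj : f j ∈ K j := hmem j (by omega) (by omega)
  have hfj1 : f (j+1) ∈ K (j+1) := hmem (j+1) (by omega) (by omega)
  have dij : Disjoint (f i) (f j) := hdisj i j hi (by omega) (by omega) (by omega) (by omega)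
  have dij1 : Disjoint (f i) (f (j+1)) := hdisj i (j+1) hi (by omega) (by omega) (by omega) (by omega)
  by_cases hs : side ℓ'' = side (f i)
  · by_cases hs2 : side (f i) = side (f j)
    · exact hA2 i j k hi hij (by omega) hk (f i) hfi (f j) hfj ℓ'' hℓ'' hs2 (hs2 ▸ hs.symm ▸ rfl) dij h1
    · have hs3 : side (f i) = side (f (j+1)) := by
        rcases Bool.eq_or_eq_not (side (f i)) (side (f j)) with h | h
        · exact absurd h hs2
        · rcases Bool.eq_or_eq_not (side (f i)) (side (f (j+1))) with h' | h'
          · exact h'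
          · exact absurd (Bool.not_inj (h.symm.trans h')) hsw
      exact hA2 i (j+1) k hi (by omega) (by omega) hk (f i) hfi (f (j+1)) hfj1 ℓ'' hℓ'' hs3 (hs3 ▸ hs.symm ▸ rfl) dij1 h2
  · exact hA1 i k hi hin (by omega) hk (f i) hfi ℓ'' hℓ'' (fun h => hs h.symm)
end

section
/- Let I be a single-line instance with stops 1,…,n satisfying Assumption A1 (separated labels) and Assumption A2 (transitivity property). Let 2 ≤ j < n, let L be a labeling of the stops 1,…,j whose labels ℓ'₁ at stop j−1 and ℓ'₂ at stop j form a switchover, and let A be a labeling of the stops j+1,…,n such that every label of A is disjoint from both ℓ'₁ and ℓ'₂. Then L ∪ A is a labeling of the whole instance I. -/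
/-- Under Assumptions A1 and A2: if `f` is a labeling of the stops `1,…,j` (with
`2 ≤ j < n`) whose chosen labels at stops `j-1` and `j` form a switchover, and `g` is a
labeling of the stops `j+1,…,n` each of whose labels is disjoint from both switchover
labels `f (j-1)` and `f j`, then the combination of `f` and `g` is a labeling of the
whole instance. -/
theorem stmt4
    (n : ℕ) (K : ℕ → Set Label) (side : Label → Bool)
    (hA1 : SepLabels n K side) (hA2 : TransProp n K side)
    (j : ℕ) (hj2 : 2 ≤ j) (hjn : j < n)
    (f g : ℕ → Label)
    (hL : IsLabelingOn K 1 j f)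
    (hsw : side (f (j - 1)) ≠ side (f j))
    (hA : IsLabelingOn K (j + 1) n g)
    (hdisj : ∀ m, j + 1 ≤ m → m ≤ n →
      Disjoint (g m) (f (j - 1)) ∧ Disjoint (g m) (f j)) :
    IsLabelingOn K 1 n (fun m => if m ≤ j then f m else g m) := by
  obtain ⟨hLmem, hLdisj⟩ := hL
  obtain ⟨hAmem, hAdisj⟩ := hA
  have key : ∀ m m', 1 ≤ m → m ≤ j → j + 1 ≤ m' → m' ≤ n → Disjoint (f m) (g m') := by
    intro m m' hm1 hmj hm'1 hm'n
    have hfm : f m ∈ K m := hLmem m hm1 hmj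
    have hgm' : g m' ∈ K m' := hAmem m' hm'1 hm'n
    have hd := hdisj m' hm'1 hm'n
    by_cases hside : side (f m) = side (g m')
    · -- same side: use A2 via the switchover label with the same side
      rcases eq_or_lt_of_le hmj with rfl | hmlt
      · exact hd.2.symm
      · have hmle : m ≤ j - 1 := Nat.le_sub_one_of_lt hmlt
        rcases eq_or_lt_of_le hmle with rfl | hmlt'
        · exact hd.1.symm
        · have hj1 : 1 ≤ j - 1 := by omega
          have hj1j : j - 1 ≤ j := by omega
          have hfj1 : f (j - 1) ∈ K (j - 1) := hLmem _ hj1 hj1j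
          have hfj : f j ∈ K j := hLmem _ (by omega) le_rfl
          by_cases hs2 : side (f m) = side (f (j - 1))
          · exact hA2 m (j - 1) m' hm1 hmlt' (by omega) hm'n
              _ hfm _ hfj1 _ hgm' hs2 (hs2 ▸ hside)
              (hLdisj m (j - 1) hm1 hmj hj1 hj1j (by omega)) hd.1.symm
          · have hs3 : side (f m) = side (f j) := by
              revert hsw hs2 hside
              cases side (f m) <;> cases side (f (j-1)) <;> cases side (f j) <;> simp
            exact hA2 m j m' hm1 hmlt (by omega) hm'n
              _ hfm _ hfj _ hgm' hs3 (hs3 ▸ hside)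
              (hLdisj m j hm1 hmj (by omega) le_rfl (by omega)) hd.2.symm
    · exact hA1 m m' hm1 (by omega) (by omega) hm'n _ hfm _ hgm' hside
  constructor
  · intro m hm1 hmn
    by_cases h : m ≤ j
    · simpa [h] using hLmem m hm1 h
    · simpa [h] using hAmem m (by omega) hmn
  · intro m m' hm1 hmn hm'1 hm'n hne
    by_cases h : m ≤ j <;> by_cases h' : m' ≤ j <;> simp only [h, h', if_pos, if_neg, if_true, if_false]
    · exact hLdisj m m' hm1 h hm'1 h' hne
    · exact key m m' hm1 h (by omega) hm'n
    · exact (key m' m hm'1 h' (by omega) hmn).symm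
    · exact hAdisj m m' (by omega) hmn (by omega) hm'n hne
end

section
/- Let I be a single-line instance satisfying Assumption A1 and Assumption A2. Then I has a labeling if and only if either I has a labeling containing no switchover, or there exist switchovers σ₁ < σ₂ < … < σ_l (l ≥ 1) such that: (a) there is a labeling of the stops from the first stop up to the second stop of σ₁ that contains both labels of σ₁ and has σ₁ as its only switchover; (b) σ_t and σ_{t+1} are compatible for every t = 1,…,l−1; and (c) there is a labeling of the stops from the first stop of σ_l to the last stop of I that contains both labels of σ_l and has σ_l as its only switchover. -/
/-- Two switchovers `σ = (ℓ₁, ℓ₂)` at stops `(i, i+1)` and `σ' = (ℓ₁', ℓ₂')` at stops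
`(j, j+1)` with `i < j` are compatible: `ℓ₂` and `ℓ₁'` are assigned to the same side,
and there is a labeling of the stops `i,…,j+1` that contains `ℓ₁, ℓ₂, ℓ₁', ℓ₂'` and has
`σ` and `σ'` as its only switchovers. -/
def Compatible (K : ℕ → Set Label) (side : Label → Bool)
    (i : ℕ) (ℓ₁ ℓ₂ : Label) (j : ℕ) (ℓ₁' ℓ₂' : Label) : Prop :=
  side ℓ₂ = side ℓ₁' ∧
  ∃ g : ℕ → Label, IsLabelingOn K i (j + 1) g ∧
    g i = ℓ₁ ∧ g (i + 1) = ℓ₂ ∧ g j = ℓ₁' ∧ g (j + 1) = ℓ₂' ∧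
    ∀ m, i ≤ m → m < j + 1 →
      (side (g m) ≠ side (g (m + 1)) ↔ (m = i ∨ m = j))

/-!
Given a labeling, its switchovers enumerated in increasing order (by `Nat.nth`) form the required
chain, with the labeling itself witnessing (a), (b) and (c). Conversely, only the switchover pairs
of the pieces matter: a labeling ending with a switchover `(p, p+1)` glues with any labeling
starting with the same switchover. Labels on opposite sides are disjoint by A1, and a label `f m`
before `p` and a label `g m'` after `p + 1` on the same side are separated by whichever of the two
switchover labels lies on that side, so A2 applies. Gluing the pieces from left to right gives a
labeling of the whole line.
-/

theorem IsLabelingOn.mono {K : ℕ → Set Label} {a b a' b' : ℕ} {f : ℕ → Label}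
    (hf : IsLabelingOn K a b f) (ha : a ≤ a') (hb : b' ≤ b) : IsLabelingOn K a' b' f :=
  ⟨fun m h₁ h₂ => hf.1 m (ha.trans h₁) (h₂.trans hb),
    fun m m' h₁ h₂ h₃ h₄ =>
      hf.2 m m' (ha.trans h₁) (h₂.trans hb) (ha.trans h₃) (h₄.trans hb)⟩

theorem isLabelingOn_of_lt {K : ℕ → Set Label} {a b : ℕ} {f : ℕ → Label}
    (hmem : ∀ m, a ≤ m → m ≤ b → f m ∈ K m)
    (hdisj : ∀ m m', a ≤ m → m < m' → m' ≤ b → Disjoint (f m) (f m')) :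
    IsLabelingOn K a b f := by
  refine ⟨hmem, fun m m' h₁ h₂ h₃ h₄ hne => ?_⟩
  rcases hne.lt_or_gt with h | h
  · exact hdisj m m' h₁ h h₄
  · exact (hdisj m' m h₃ h h₂).symm

section Glue

variable {n : ℕ} {K : ℕ → Set Label} {side : Label → Bool}

theorem IsLabelingOn.glue (hA1 : SepLabels n K side) (hA2 : TransProp n K side)
    {a p b : ℕ} {f g : ℕ → Label} (ha : 1 ≤ a) (hb : b ≤ n)
    (hf : IsLabelingOn K a (p + 1) f) (hg : IsLabelingOn K p b g)
    (h₀ : f p = g p) (h₁ : f (p + 1) = g (p + 1)) (hside : side (f p) ≠ side (f (p + 1))) :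
    ∃ h : ℕ → Label, IsLabelingOn K a b h ∧ ∀ m, p ≤ m → h m = g m := by
  have cross : ∀ m m', a ≤ m → m < p → p + 1 < m' → m' ≤ b → Disjoint (f m) (g m') := by
    intro m m' hm hmp hpm' hm'
    have hfm : f m ∈ K m := hf.1 m hm (by omega)
    have hgm' : g m' ∈ K m' := hg.1 m' (by omega) hm'
    by_cases hs : side (f m) = side (g m')
    · obtain ⟨c, hc, hmc⟩ : ∃ c, (c = p ∨ c = p + 1) ∧ side (f m) = side (f c) := by
        by_cases h : side (f m) = side (f (p + 1))
        · exact ⟨p + 1, Or.inr rfl, h⟩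
        · exact ⟨p, Or.inl rfl, (Bool.eq_not_iff.2 h).trans (Bool.eq_not_iff.2 hside).symm⟩
      have hfc : f c = g c := by rcases hc with rfl | rfl <;> assumption
      refine hA2 m c m' (by omega) (by omega) (by omega) (by omega) (f m) hfm (f c)
        (hf.1 c (by omega) (by omega)) (g m') hgm' hmc (hmc.symm.trans hs)
        (hf.2 m c (by omega) (by omega) (by omega) (by omega) (by omega)) ?_
      rw [hfc]
      exact hg.2 c m' (by omega) (by omega) (by omega) hm' (by omega)
    · exact hA1 m m' (by omega) (by omega) (by omega) (by omega) _ hfm _ hgm' hs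
  have hright : ∀ m, p ≤ m → (if m ≤ p + 1 then f m else g m) = g m := by
    intro m hm
    split_ifs with h
    · rcases (show m = p ∨ m = p + 1 by omega) with rfl | rfl <;> assumption
    · rfl
  refine ⟨fun m => if m ≤ p + 1 then f m else g m, isLabelingOn_of_lt ?_ ?_, hright⟩
  · intro m hm hmb
    split_ifs with h
    · exact hf.1 m hm h
    · exact hg.1 m (by omega) hmb
  · intro m m' hm hmm' hm'
    by_cases hpm : p ≤ m
    · rw [hright m hpm, hright m' (by omega)]
      exact hg.2 m m' hpm (by omega) (by omega) hm' (by omega)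
    by_cases hm'p : m' ≤ p + 1
    · simp only [if_pos hm'p, if_pos (show m ≤ p + 1 by omega)]
      exact hf.2 m m' hm (by omega) (by omega) hm'p (by omega)
    · simp only [if_pos (show m ≤ p + 1 by omega), if_neg hm'p]
      exact cross m m' hm (by omega) (by omega) hm'

theorem exists_labeling_of_segments (hA1 : SepLabels n K side) (hA2 : TransProp n K side)
    {l : ℕ} (hl : 1 ≤ l) {pos : ℕ → ℕ} {L1 L2 : ℕ → Label}
    (hpos : ∀ t, 1 ≤ t → t ≤ l → pos t < n ∧ side (L1 t) ≠ side (L2 t))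
    (hmono : ∀ t, 1 ≤ t → t < l → pos t < pos (t + 1))
    (hfirst : ∃ g, IsLabelingOn K 1 (pos 1 + 1) g ∧ g (pos 1) = L1 1 ∧ g (pos 1 + 1) = L2 1)
    (hmid : ∀ t, 1 ≤ t → t < l → ∃ g, IsLabelingOn K (pos t) (pos (t + 1) + 1) g ∧
      g (pos t) = L1 t ∧ g (pos t + 1) = L2 t ∧
      g (pos (t + 1)) = L1 (t + 1) ∧ g (pos (t + 1) + 1) = L2 (t + 1))
    (hlast : ∃ g, IsLabelingOn K (pos l) n g ∧ g (pos l) = L1 l ∧ g (pos l + 1) = L2 l) :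
    ∃ f, IsLabelingOn K 1 n f := by
  have hprefix : ∀ t, 1 ≤ t → t ≤ l → ∃ f, IsLabelingOn K 1 (pos t + 1) f ∧
      f (pos t) = L1 t ∧ f (pos t + 1) = L2 t := by
    intro t ht
    induction t, ht using Nat.le_induction with
    | base => exact fun _ => hfirst
    | succ t ht ih =>
      intro htl
      obtain ⟨f, hf, hf₀, hf₁⟩ := ih (by omega)
      obtain ⟨g, hg, hg₀, hg₁, hg₂, hg₃⟩ := hmid t ht htl
      obtain ⟨h, hh, hhg⟩ := hf.glue hA1 hA2 le_rfl (hpos (t + 1) (by omega) htl).1 hg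
        (hf₀.trans hg₀.symm) (hf₁.trans hg₁.symm) (by rw [hf₀, hf₁]; exact (hpos t ht (by omega)).2)
      have hlt := hmono t ht htl
      exact ⟨h, hh, (hhg _ (by omega)).trans hg₂, (hhg _ (by omega)).trans hg₃⟩
  obtain ⟨f, hf, hf₀, hf₁⟩ := hprefix l hl le_rfl
  obtain ⟨g, hg, hg₀, hg₁⟩ := hlast
  obtain ⟨h, hh, -⟩ := hf.glue hA1 hA2 le_rfl le_rfl hg (hf₀.trans hg₀.symm)
    (hf₁.trans hg₁.symm) (by rw [hf₀, hf₁]; exact (hpos l hl le_rfl).2)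
  exact ⟨h, hh⟩

end Glue

theorem Nat.nth_mem_of_lt_count {p : ℕ → Prop} [DecidablePred p] {k n : ℕ}
    (h : k < Nat.count p n) : p (Nat.nth p k) :=
  Nat.nth_mem k fun hf => h.trans_le (Nat.count_le_card hf n)

theorem eq_of_forall_eq_succ {α : Type*} {s : ℕ → α} {a b : ℕ} (hab : a ≤ b)
    (h : ∀ m, a ≤ m → m < b → s m = s (m + 1)) : s a = s b := by
  induction b, hab using Nat.le_induction with
  | base => rfl
  | succ b hab ih =>
    exact (ih fun m h₁ h₂ => h m h₁ (by omega)).trans (h b hab (by omega))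

section Switchovers

variable {n : ℕ} {side : Label → Bool} {f : ℕ → Label}

def IsSwitchover (side : Label → Bool) (n : ℕ) (f : ℕ → Label) (m : ℕ) : Prop :=
  1 ≤ m ∧ m < n ∧ side (f m) ≠ side (f (m + 1))

open Classical in
noncomputable def switchoverCount (side : Label → Bool) (n : ℕ) (f : ℕ → Label) : ℕ :=
  Nat.count (IsSwitchover side n f) n

/-- Indexed from `1`: the paper's `σ_t` is at stops `(switchoverPos side n f t, _ + 1)`. -/
noncomputable def switchoverPos (side : Label → Bool) (n : ℕ) (f : ℕ → Label) (t : ℕ) : ℕ :=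
  Nat.nth (IsSwitchover side n f) (t - 1)

open Classical in
theorem one_le_switchoverCount (h : ¬ ∀ m, 1 ≤ m → m < n → side (f m) = side (f (m + 1))) :
    1 ≤ switchoverCount side n f := by
  push Not at h
  obtain ⟨m, hm₁, hmn, hm⟩ := h
  exact (Nat.zero_le _).trans_lt (Nat.count_strict_mono ⟨hm₁, hmn, hm⟩ hmn)

open Classical in
theorem isSwitchover_switchoverPos {t : ℕ} (h₁ : 1 ≤ t) (h₂ : t ≤ switchoverCount side n f) :
    IsSwitchover side n f (switchoverPos side n f t) :=
  Nat.nth_mem_of_lt_count (n := n) (by unfold switchoverCount at h₂; omega)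

open Classical in
theorem switchoverPos_lt_succ {t : ℕ} (h₁ : 1 ≤ t) (h₂ : t < switchoverCount side n f) :
    switchoverPos side n f t < switchoverPos side n f (t + 1) :=
  Nat.nth_lt_nth' (by omega) fun hf => h₂.trans_le (Nat.count_le_card hf n)

theorem switchoverPos_one_le {m : ℕ} (hm : IsSwitchover side n f m) :
    switchoverPos side n f 1 ≤ m := by
  simpa [switchoverPos, Nat.nth_zero] using Nat.sInf_le hm

open Classical in
theorem le_switchoverPos_count {m : ℕ} (hm : IsSwitchover side n f m) :
    m ≤ switchoverPos side n f (switchoverCount side n f) := by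
  have hlt : Nat.count (IsSwitchover side n f) m < switchoverCount side n f :=
    Nat.count_strict_mono hm hm.2.1
  have hl : switchoverCount side n f - 1 < Nat.count (IsSwitchover side n f) n := by
    unfold switchoverCount at hlt ⊢; omega
  rw [← Nat.nth_count hm]
  exact Nat.nth_le_nth' (by omega) fun hf => hl.trans_le (Nat.count_le_card hf n)

theorem eq_switchoverPos_of_le_of_le {m t : ℕ} (hm : IsSwitchover side n f m) (ht : 1 ≤ t)
    (hlo : switchoverPos side n f t ≤ m) (hhi : m ≤ switchoverPos side n f (t + 1)) :
    m = switchoverPos side n f t ∨ m = switchoverPos side n f (t + 1) := by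
  rcases hhi.lt_or_eq with hhi | hhi
  · exact Or.inl (le_antisymm (Nat.le_nth_of_lt_nth_succ (k := t - 1)
      (by rwa [Nat.sub_add_cancel ht]) hm) hlo)
  · exact Or.inr hhi

open Classical in
theorem side_ne_succ_iff_eq_switchoverPos_one (hl : 1 ≤ switchoverCount side n f) :
    ∀ m, 1 ≤ m → m < switchoverPos side n f 1 + 1 →
      (side (f m) ≠ side (f (m + 1)) ↔ m = switchoverPos side n f 1) := by
  have hfirst := isSwitchover_switchoverPos le_rfl hl
  refine fun m hm₁ hm₂ => ⟨fun hne => ?_, fun hm => hm ▸ hfirst.2.2⟩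
  exact le_antisymm (by omega) (switchoverPos_one_le ⟨hm₁, by have := hfirst.2.1; omega, hne⟩)

open Classical in
theorem side_ne_succ_iff_eq_switchoverPos_or_succ {t : ℕ} (h₁ : 1 ≤ t)
    (h₂ : t < switchoverCount side n f) :
    ∀ m, switchoverPos side n f t ≤ m → m < switchoverPos side n f (t + 1) + 1 →
      (side (f m) ≠ side (f (m + 1)) ↔
        m = switchoverPos side n f t ∨ m = switchoverPos side n f (t + 1)) := by
  have hcur := isSwitchover_switchoverPos h₁ h₂.le
  have hnext := isSwitchover_switchoverPos (t := t + 1) (by omega) h₂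
  refine fun m hm₁ hm₂ => ⟨fun hne => ?_, ?_⟩
  · exact eq_switchoverPos_of_le_of_le ⟨by have := hcur.1; omega,
      by have := hnext.2.1; omega, hne⟩ h₁ hm₁ (by omega)
  · rintro (rfl | rfl)
    exacts [hcur.2.2, hnext.2.2]

open Classical in
theorem side_switchoverPos_succ_eq {t : ℕ} (h₁ : 1 ≤ t) (h₂ : t < switchoverCount side n f) :
    side (f (switchoverPos side n f t + 1)) = side (f (switchoverPos side n f (t + 1))) := by
  have hlt := switchoverPos_lt_succ h₁ h₂
  refine eq_of_forall_eq_succ (s := fun m => side (f m)) hlt fun m hm₁ hm₂ => ?_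
  by_contra hne
  have := (side_ne_succ_iff_eq_switchoverPos_or_succ h₁ h₂ m (by omega)
    (by omega)).1 hne
  omega

open Classical in
theorem side_ne_succ_iff_eq_switchoverPos_count (hl : 1 ≤ switchoverCount side n f) :
    ∀ m, switchoverPos side n f (switchoverCount side n f) ≤ m → m < n →
      (side (f m) ≠ side (f (m + 1)) ↔ m = switchoverPos side n f (switchoverCount side n f)) := by
  have hlast := isSwitchover_switchoverPos hl le_rfl
  refine fun m hm₁ hm₂ => ⟨fun hne => ?_, fun hm => hm ▸ hlast.2.2⟩
  exact le_antisymm (le_switchoverPos_count ⟨by have := hlast.1; omega, hm₂, hne⟩) hm₁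

end Switchovers

theorem stmt6_general
    (n : ℕ) (K : ℕ → Set Label) (side : Label → Bool)
    (hA1 : SepLabels n K side) (hA2 : TransProp n K side) :
    (∃ f : ℕ → Label, IsLabelingOn K 1 n f) ↔
      ((∃ f : ℕ → Label, IsLabelingOn K 1 n f ∧
          ∀ m, 1 ≤ m → m < n → side (f m) = side (f (m + 1))) ∨
       (∃ l : ℕ, 1 ≤ l ∧ ∃ pos : ℕ → ℕ, ∃ L1 L2 : ℕ → Label,
          (∀ t, 1 ≤ t → t ≤ l → 1 ≤ pos t ∧ pos t < n ∧
            L1 t ∈ K (pos t) ∧ L2 t ∈ K (pos t + 1) ∧ side (L1 t) ≠ side (L2 t)) ∧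
          (∀ t, 1 ≤ t → t < l → pos t < pos (t + 1)) ∧
          -- (a)
          (∃ g : ℕ → Label, IsLabelingOn K 1 (pos 1 + 1) g ∧
            g (pos 1) = L1 1 ∧ g (pos 1 + 1) = L2 1 ∧
            ∀ m, 1 ≤ m → m < pos 1 + 1 →
              (side (g m) ≠ side (g (m + 1)) ↔ m = pos 1)) ∧
          -- (b)
          (∀ t, 1 ≤ t → t < l →
            Compatible K side (pos t) (L1 t) (L2 t)
              (pos (t + 1)) (L1 (t + 1)) (L2 (t + 1))) ∧
          -- (c)
          (∃ g : ℕ → Label, IsLabelingOn K (pos l) n g ∧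
            g (pos l) = L1 l ∧ g (pos l + 1) = L2 l ∧
            ∀ m, pos l ≤ m → m < n →
              (side (g m) ≠ side (g (m + 1)) ↔ m = pos l)))) := by
  constructor
  · rintro ⟨f, hf⟩
    by_cases hsame : ∀ m, 1 ≤ m → m < n → side (f m) = side (f (m + 1))
    · exact Or.inl ⟨f, hf, hsame⟩
    have hl := one_le_switchoverCount hsame
    set l := switchoverCount side n f
    set pos := switchoverPos side n f
    have hsw : ∀ t, 1 ≤ t → t ≤ l → IsSwitchover side n f (pos t) :=
      fun _ => isSwitchover_switchoverPos
    refine Or.inr ⟨l, hl, pos, fun t => f (pos t), fun t => f (pos t + 1), fun t h₁ h₂ => ?_,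
      fun t h₁ h₂ => switchoverPos_lt_succ h₁ h₂, ?_, fun t h₁ h₂ => ?_, ?_⟩
    · obtain ⟨h₁', h₂', hne⟩ := hsw t h₁ h₂
      exact ⟨h₁', h₂', hf.1 _ h₁' h₂'.le, hf.1 _ (by omega) h₂', hne⟩
    · exact ⟨f, hf.mono le_rfl (hsw 1 le_rfl hl).2.1, rfl, rfl,
        side_ne_succ_iff_eq_switchoverPos_one hl⟩
    · exact ⟨side_switchoverPos_succ_eq h₁ h₂, f,
        hf.mono (hsw t h₁ h₂.le).1 (hsw (t + 1) (by omega) h₂).2.1, rfl, rfl, rfl, rfl,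
        side_ne_succ_iff_eq_switchoverPos_or_succ h₁ h₂⟩
    · exact ⟨f, hf.mono (hsw l hl le_rfl).1 le_rfl, rfl, rfl,
        side_ne_succ_iff_eq_switchoverPos_count hl⟩
  · rintro (⟨f, hf, -⟩ | ⟨l, hl, pos, L1, L2, hsw, hmono, ⟨g, hg, hg₀, hg₁, -⟩, hcomp,
      ⟨g', hg', hg'₀, hg'₁, -⟩⟩)
    · exact ⟨f, hf⟩
    refine exists_labeling_of_segments hA1 hA2 hl (fun t h₁ h₂ => ⟨(hsw t h₁ h₂).2.1,
      (hsw t h₁ h₂).2.2.2.2⟩) hmono ⟨g, hg, hg₀, hg₁⟩ (fun t h₁ h₂ => ?_) ⟨g', hg', hg'₀, hg'₁⟩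
    obtain ⟨-, g, hg, hg₀, hg₁, hg₂, hg₃, -⟩ := hcomp t h₁ h₂
    exact ⟨g, hg, hg₀, hg₁, hg₂, hg₃⟩

/-- Under Assumptions A1 and A2: the instance has a labeling iff either it has a
labeling containing no switchover, or there exist switchovers `σ₁ < σ₂ < … < σ_l`
(`l ≥ 1`, the `t`-th switchover consisting of labels `L1 t ∈ K (pos t)` and
`L2 t ∈ K (pos t + 1)` assigned to opposite sides) such that:
(a) there is a labeling of the stops `1,…,pos 1 + 1` containing both labels of `σ₁`
whose only switchover is `σ₁`;
(b) `σ_t` and `σ_{t+1}` are compatible for every `t = 1,…,l-1`; and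
(c) there is a labeling of the stops `pos l,…,n` containing both labels of `σ_l`
whose only switchover is `σ_l`. -/
theorem stmt6
    (n : ℕ) (hn : 1 ≤ n) (K : ℕ → Set Label) (side : Label → Bool)
    (hA1 : SepLabels n K side) (hA2 : TransProp n K side) :
    (∃ f : ℕ → Label, IsLabelingOn K 1 n f) ↔
      ((∃ f : ℕ → Label, IsLabelingOn K 1 n f ∧
          ∀ m, 1 ≤ m → m < n → side (f m) = side (f (m + 1))) ∨
       (∃ l : ℕ, 1 ≤ l ∧ ∃ pos : ℕ → ℕ, ∃ L1 L2 : ℕ → Label,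
          (∀ t, 1 ≤ t → t ≤ l → 1 ≤ pos t ∧ pos t < n ∧
            L1 t ∈ K (pos t) ∧ L2 t ∈ K (pos t + 1) ∧ side (L1 t) ≠ side (L2 t)) ∧
          (∀ t, 1 ≤ t → t < l → pos t < pos (t + 1)) ∧
          -- (a)
          (∃ g : ℕ → Label, IsLabelingOn K 1 (pos 1 + 1) g ∧
            g (pos 1) = L1 1 ∧ g (pos 1 + 1) = L2 1 ∧
            ∀ m, 1 ≤ m → m < pos 1 + 1 →
              (side (g m) ≠ side (g (m + 1)) ↔ m = pos 1)) ∧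
          -- (b)
          (∀ t, 1 ≤ t → t < l →
            Compatible K side (pos t) (L1 t) (L2 t)
              (pos (t + 1)) (L1 (t + 1)) (L2 (t + 1))) ∧
          -- (c)
          (∃ g : ℕ → Label, IsLabelingOn K (pos l) n g ∧
            g (pos l) = L1 l ∧ g (pos l + 1) = L2 l ∧
            ∀ m, pos l ≤ m → m < n →
              (side (g m) ≠ side (g (m + 1)) ↔ m = pos l)))) :=
  stmt6_general n K side hA1 hA2
end
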